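/- Let Q be a finite quandle such that the canonical quandle morphism φ_Q : Q → G(Q) is injective. Then there exist a positive integer n and an injective map ρ : Q → GL_n(ℂ) such that ρ(x ▷ y) = ρ(x) ρ(y) ρ(x)⁻¹ for all x, y ∈ Q and ρ(x) is a unitary matrix for every x ∈ Q (i.e. Q admits a faithful finite-dimensional unitary quandle representation over ℂ). -/

import Mathlib

/-!
The enveloping group `G = G(Q)` acts on `Q`, and `g φ(x) g⁻¹ = φ(g • x)`, so the kernel `K` of
the action is central. As `Q` is finite, `G` is finitely generated and `K` has finite index, so
the center has finite index and, by Schur, the commutator subgroup `G'` is finite, of order `e`.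
The `2e`-th powers of the finitely generated abelian group `K` form a normal subgroup `N` of
finite index. Counting generators from each orbit gives homomorphisms `G → ℤ` which detect `G'`.
If `φ(x)⁻¹ φ(y) = k ^ 2e`, parity of these degrees puts `x` and `y` in one orbit, then `k ∈ G'`,
so `k ^ e = 1` and `φ(x) = φ(y)`. Thus `φ` stays injective modulo `N`, and the permutation
matrices of the regular representation of `G ⧸ N` give a faithful unitary representation.
-/

open Quandles
open scoped commutatorElement

namespace Subgroup

variable {G : Type*} [Group G]

theorem mul_mul_inv_of_mem_center {z : G} (hz : z ∈ center G) (g : G) : z * g * z⁻¹ = g := by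
  rw [← mem_center_iff.mp hz g, mul_inv_cancel_right]

theorem commutatorElement_mul_mul_of_mem_center {z w : G} (hz : z ∈ center G)
    (hw : w ∈ center G) (a b : G) : ⁅a * z, b * w⁆ = ⁅a, b⁆ :=
  calc ⁅a * z, b * w⁆ = a * (z * (b * w) * z⁻¹) * a⁻¹ * (b * w)⁻¹ := by group
    _ = a * b * (w * a⁻¹ * w⁻¹) * b⁻¹ := by rw [mul_mul_inv_of_mem_center hz]; group
    _ = ⁅a, b⁆ := by rw [mul_mul_inv_of_mem_center hw, commutatorElement_def]

instance finite_commutatorSet_of_finiteIndex_center [(center G).FiniteIndex] :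
    Finite (commutatorSet G) := by
  let f : (G ⧸ center G) × (G ⧸ center G) → G := fun p => ⁅p.1.out, p.2.out⁆
  refine ((Set.finite_range f).subset ?_).to_subtype
  rintro _ ⟨a, b, rfl⟩
  obtain ⟨z, hz⟩ := QuotientGroup.mk_out_eq_mul (center G) a
  obtain ⟨w, hw⟩ := QuotientGroup.mk_out_eq_mul (center G) b
  exact ⟨(a, b), by simp only [f, hz, hw, commutatorElement_mul_mul_of_mem_center z.2 w.2]⟩

open scoped IsMulCommutative in
theorem exists_normal_finiteIndex_le_powers_of_le_center [Group.FG G] {K : Subgroup G}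
    [K.FiniteIndex] (hK : K ≤ center G) {m : ℕ} (hm : m ≠ 0) :
    ∃ N : Subgroup G, N.Normal ∧ N.FiniteIndex ∧ ∀ z ∈ N, ∃ k ∈ K, k ^ m = z := by
  have : IsMulCommutative K := ⟨⟨fun a b => Subtype.ext (mem_center_iff.mp (hK b.2) a)⟩⟩
  have : Group.FG K := fg_of_index_ne_zero K
  have hpow := finiteIndex_range_powMonoidHom_of_fg K hm
  set N := (powMonoidHom (α := K) m).range.map K.subtype
  have hNK : N ≤ K := map_subtype_le _
  refine ⟨N, ⟨fun n hn g => ?_⟩, ⟨?_⟩, ?_⟩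
  · rwa [mem_center_iff.mp (hK (hNK hn)) g, mul_inv_cancel_right]
  · rw [← relIndex_mul_index hNK, relIndex, subgroupOf,
      comap_map_eq_self_of_injective K.subtype_injective]
    exact mul_ne_zero hpow.index_ne_zero FiniteIndex.index_ne_zero
  · rintro _ ⟨_, ⟨k, rfl⟩, rfl⟩
    exact ⟨k, k.2, rfl⟩

end Subgroup

theorem Equiv.toPEquiv_injective {α β : Type*} :
    Function.Injective (Equiv.toPEquiv : (α ≃ β) → (α ≃. β)) := fun σ τ h =>
  Equiv.ext fun x => Option.some_injective _ <| by
    rw [← toPEquiv_apply, h, toPEquiv_apply]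

namespace Matrix

variable {n R : Type*} [DecidableEq n] [Fintype n]

theorem permMatrixHom_injective [NonAssocSemiring R] [Nontrivial R] :
    Function.Injective (permMatrixHom (n := n) (R := R)) := fun _ _ h =>
  inv_injective <| Equiv.toPEquiv_injective <| PEquiv.toMatrix_injective h

theorem permMatrixHom_mem_unitaryGroup [CommRing R] [StarRing R] (σ : Equiv.Perm n) :
    permMatrixHom σ ∈ unitaryGroup n R := by
  rw [mem_unitaryGroup_iff, star_eq_conjTranspose, permMatrixHom_apply, conjTranspose_permMatrix,
    ← permMatrixHom_apply, ← permMatrixHom_apply, ← map_mul, mul_inv_cancel, map_one]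

theorem exists_injective_hom_unitaryGroup (F R : Type*) [Group F] [Finite F] [CommRing R]
    [StarRing R] [Nontrivial R] :
    ∃ n, 0 < n ∧ ∃ u : F →* unitaryGroup (Fin n) R, Function.Injective u := by
  let cayley : F →* Equiv.Perm (Fin (Nat.card F)) :=
    (Finite.equivFin F).permCongrHom.toMonoidHom.comp (MulAction.toPermHom F F)
  refine ⟨Nat.card F, Nat.card_pos,
    (permMatrixHom.codRestrict _ permMatrixHom_mem_unitaryGroup).comp cayley, fun a b h => ?_⟩
  have h' : cayley a = cayley b := permMatrixHom_injective (congrArg Subtype.val h)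
  exact MulAction.toPerm_injective (α := F) (β := F) ((Finite.equivFin F).permCongrHom.injective h')

end Matrix

namespace Rack

variable {R : Type*} [Rack R]

@[elab_as_elim]
theorem EnvelGroup.induction_on {p : EnvelGroup R → Prop} (g : EnvelGroup R)
    (of : ∀ x, p (toEnvelGroup R x)) (one : p 1) (mul : ∀ a b, p a → p b → p (a * b))
    (inv : ∀ a, p a → p a⁻¹) : p g := by
  induction g using Quotient.inductionOn with
  | h a =>
    induction a with
    | unit => exact one
    | incl x => exact of x
    | mul a b ha hb => exact mul _ _ ha hb
    | inv a ha => exact inv _ ha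

theorem toEnvelGroup_act (x y : R) :
    (toEnvelGroup R (x ◃ y) : EnvelGroup R) =
      toEnvelGroup R x * toEnvelGroup R y * (toEnvelGroup R x)⁻¹ :=
  (toEnvelGroup R).map_act

theorem conj_toEnvelGroup (g : EnvelGroup R) (x : R) :
    g * toEnvelGroup R x * g⁻¹ = toEnvelGroup R (envelAction g x) := by
  induction g using EnvelGroup.induction_on generalizing x with
  | of y => exact (toEnvelGroup_act y x).symm
  | one => simp
  | mul a b ha hb =>
    rw [map_mul, Equiv.Perm.mul_apply, ← ha, ← hb]
    group
  | inv a ha =>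
    have := ha (envelAction a⁻¹ x)
    rw [← Equiv.Perm.mul_apply, ← map_mul, mul_inv_cancel, map_one, Equiv.Perm.one_apply] at this
    rw [← this]
    group

theorem ker_envelAction_le_center :
    (envelAction (R := R)).ker ≤ Subgroup.center (EnvelGroup R) := by
  intro g hg
  rw [Subgroup.mem_center_iff]
  intro h
  induction h using EnvelGroup.induction_on with
  | of x =>
    rw [eq_comm, ← mul_inv_eq_iff_eq_mul, conj_toEnvelGroup, hg, Equiv.Perm.one_apply]
  | one => simp
  | mul a b ha hb => rw [mul_assoc, hb, ← mul_assoc, ha, mul_assoc]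
  | inv a ha => rw [inv_mul_eq_iff_eq_mul, ← mul_assoc, ha, mul_inv_cancel_right]

variable (R) in
theorem closure_range_toEnvelGroup :
    Subgroup.closure (Set.range fun x : R => (toEnvelGroup R x : EnvelGroup R)) = ⊤ :=
  (Subgroup.eq_top_iff' _).mpr fun g =>
    g.induction_on (fun x => Subgroup.subset_closure ⟨x, rfl⟩) (one_mem _) (fun _ _ => mul_mem)
      (fun _ => inv_mem)

instance [Finite R] : Group.FG (EnvelGroup R) :=
  Group.fg_iff.mpr ⟨_, closure_range_toEnvelGroup R, Set.finite_range _⟩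

instance [Finite R] : (Subgroup.center (EnvelGroup R)).FiniteIndex :=
  Subgroup.finiteIndex_of_le ker_envelAction_le_center

variable (R) in
def Orbit : Type _ := Quot fun a b : R => ∃ x, x ◃ a = b

def Orbit.mk (x : R) : Orbit R := Quot.mk _ x

theorem Orbit.mk_act (x y : R) : Orbit.mk (x ◃ y) = Orbit.mk y :=
  (Quot.sound ⟨x, rfl⟩).symm

instance [Finite R] : Finite (Orbit R) := Quot.finite _

def Orbit.toAbelianization : Orbit R → Abelianization (EnvelGroup R) :=
  Quot.lift (fun x => Abelianization.of (toEnvelGroup R x : EnvelGroup R)) fun _ _ ⟨x, hxy⟩ => by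
    rw [← hxy, toEnvelGroup_act, map_mul, map_mul, map_inv, mul_inv_cancel_comm]

open Classical in
noncomputable def orbitDegree (c : Orbit R) : EnvelGroup R →* Multiplicative ℤ :=
  toEnvelGroup.map
    { toFun x := Multiplicative.ofAdd (if Orbit.mk x = c then 1 else 0)
      map_act' := by
        simp only [Orbit.mk_act]
        exact (mul_inv_cancel_comm _ _).symm }

open Classical in
theorem orbitDegree_toEnvelGroup (c : Orbit R) (x : R) :
    orbitDegree c (toEnvelGroup R x) = Multiplicative.ofAdd (if Orbit.mk x = c then 1 else 0) :=
  rfl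

theorem abelianization_of_eq_prod [Fintype (Orbit R)] (g : EnvelGroup R) :
    Abelianization.of g = ∏ c, c.toAbelianization ^ (orbitDegree c g).toAdd := by
  induction g using EnvelGroup.induction_on with
  | of x =>
    classical
    simp only [orbitDegree_toEnvelGroup, toAdd_ofAdd, pow_ite, zpow_ofNat, pow_one, pow_zero,
      Finset.prod_ite_eq, Finset.mem_univ, ↓reduceIte]
    rfl
  | one => simp
  | mul a b ha hb => simp [ha, hb, zpow_add, Finset.prod_mul_distrib]
  | inv a ha => simp [ha]

theorem mem_commutator_of_forall_orbitDegree_eq_one [Finite R] {g : EnvelGroup R}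
    (h : ∀ c, orbitDegree c g = 1) : g ∈ commutator (EnvelGroup R) := by
  have := Fintype.ofFinite (Orbit R)
  rw [← Abelianization.ker_of, MonoidHom.mem_ker, abelianization_of_eq_prod]
  simp [h]

theorem orbit_eq_of_inv_mul_eq_pow_two_mul {x y : R} {k : EnvelGroup R} {n : ℕ}
    (h : (toEnvelGroup R x : EnvelGroup R)⁻¹ * toEnvelGroup R y = k ^ (2 * n)) :
    Orbit.mk x = Orbit.mk y := by
  classical
  by_contra hxy
  -- the degree at the orbit of `x` would be `-1 = 2n · d`
  have := congrArg (fun g => (orbitDegree (Orbit.mk x) g).toAdd) h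
  simp only [map_mul, map_inv, map_pow, orbitDegree_toEnvelGroup, if_pos, Ne.symm hxy,
    toAdd_mul, toAdd_inv, toAdd_pow, toAdd_ofAdd, if_false, add_zero, nsmul_eq_mul,
    Nat.cast_mul, Nat.cast_ofNat, mul_assoc] at this
  omega

theorem toEnvelGroup_eq_of_inv_mul_eq_pow [Finite R] {x y : R} {k : EnvelGroup R}
    (h : (toEnvelGroup R x : EnvelGroup R)⁻¹ * toEnvelGroup R y =
      k ^ (2 * Nat.card (commutator (EnvelGroup R)))) :
    (toEnvelGroup R x : EnvelGroup R) = toEnvelGroup R y := by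
  classical
  have hxy := orbit_eq_of_inv_mul_eq_pow_two_mul h
  have hk : k ∈ commutator (EnvelGroup R) := by
    refine mem_commutator_of_forall_orbitDegree_eq_one fun c => ?_
    have := congrArg (orbitDegree c) h
    simp only [map_mul, map_inv, map_pow, orbitDegree_toEnvelGroup, hxy, inv_mul_cancel] at this
    exact (pow_eq_one_iff_left (mul_ne_zero two_ne_zero Nat.card_pos.ne')).mp this.symm
  have hke : k ^ Nat.card (commutator (EnvelGroup R)) = 1 :=
    congrArg Subtype.val (pow_card_eq_one' (x := (⟨k, hk⟩ : commutator (EnvelGroup R))))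
  rw [← inv_mul_eq_one, h, pow_mul', hke, one_pow]

end Rack

/-- A finite quandle `Q` whose canonical map `φ_Q : Q → G(Q)` to the enveloping group is
injective admits a faithful finite-dimensional unitary quandle representation over `ℂ`:
an injective map `ρ : Q → GL_n(ℂ)` with `ρ(x ◃ y) = ρ(x) ρ(y) ρ(x)⁻¹` whose values are
unitary matrices. -/
theorem quandle_faithful_unitary_rep (Q : Type) [Quandle Q] [Finite Q]
    (hφ : Function.Injective fun x : Q => (Rack.toEnvelGroup Q x : Rack.EnvelGroup Q)) :
    ∃ n : ℕ, 0 < n ∧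
      ∃ ρ : Q → Matrix.GeneralLinearGroup (Fin n) ℂ,
        Function.Injective ρ ∧
        (∀ x y : Q, ρ (x ◃ y) = ρ x * ρ y * (ρ x)⁻¹) ∧
        ∀ x : Q, (ρ x : Matrix (Fin n) (Fin n) ℂ) ∈ Matrix.unitaryGroup (Fin n) ℂ := by
  obtain ⟨N, hN, hNfin, hNpow⟩ := Subgroup.exists_normal_finiteIndex_le_powers_of_le_center
    (Rack.ker_envelAction_le_center (R := Q)) (m := 2 * Nat.card (commutator (Rack.EnvelGroup Q)))
    (mul_ne_zero two_ne_zero Nat.card_pos.ne')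
  obtain ⟨n, hn, u, hu⟩ := Matrix.exists_injective_hom_unitaryGroup (Rack.EnvelGroup Q ⧸ N) ℂ
  let ρ : Rack.EnvelGroup Q →* Matrix.GeneralLinearGroup (Fin n) ℂ :=
    Unitary.toUnits.comp (u.comp (QuotientGroup.mk' N))
  refine ⟨n, hn, fun x => ρ (Rack.toEnvelGroup Q x), fun x y hxy => hφ ?_, fun x y => ?_,
    fun x => (u _).2⟩
  · obtain ⟨k, -, hk⟩ := hNpow _ (QuotientGroup.eq.mp (hu (Unitary.toUnits_injective hxy)))
    exact Rack.toEnvelGroup_eq_of_inv_mul_eq_pow hk.symm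
  · simp only [Rack.toEnvelGroup_act, map_mul, map_inv]
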